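/- Let K be a field of characteristic p > 0 and let n be a positive integer with n not divisible by p. Then for every g ∈ J(K) there exists a unique ω ∈ J(K) such that ω^[n] = g. -/

import Mathlib

open PowerSeries Finset

/-- Composition `f ∘ g` of formal power series (substitution of `g` into `f`).
This coefficientwise formula agrees with the usual substitution whenever the
constant coefficient of `g` is zero, since then `g ^ j` has order at least `j`. -/
noncomputable def psComp {Z : Type*} [CommRing Z] (f g : Z⟦X⟧) : Z⟦X⟧ :=
  PowerSeries.mk fun n => ∑ j ∈ Finset.range (n + 1), coeff j f * coeff n (g ^ j)

/-- The `m`-th compositional iterate: `ω^[0] = X` and `ω^[m+1] = ω ∘ ω^[m]`. -/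
noncomputable def psIter {Z : Type*} [CommRing Z] (ω : Z⟦X⟧) : ℕ → Z⟦X⟧
  | 0 => PowerSeries.X
  | m + 1 => psComp ω (psIter ω m)

/-! If `ω` and `ω'` are tangent to the identity and agree below degree `k`, then `ω^[m]` and
`ω'^[m]` agree below degree `k` and differ in degree `k` by `m (ω_k - ω'_k)`: near the identity,
composition adds perturbations to first order. When `n` is invertible, the degree-`k` coefficient
of an `n`-th iterative root of `g` is thus forced by its lower coefficients and by `g_k`, which
gives uniqueness, and choosing it that way degree by degree gives existence. -/

section

variable {R : Type*} [CommRing R]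

theorem PowerSeries.coeff_self_pow_of_constantCoeff_eq_zero {g : R⟦X⟧}
    (hg : constantCoeff g = 0) (m : ℕ) : coeff m (g ^ m) = coeff 1 g ^ m := by
  obtain ⟨σ, rfl⟩ := X_dvd_iff.mpr hg
  simpa [mul_pow] using coeff_X_pow_mul (σ ^ m) m 0

theorem PowerSeries.X_pow_succ_dvd_pow_sub_pow {g g' : R⟦X⟧} (hg : constantCoeff g = 0)
    (hg' : constantCoeff g' = 0) {k : ℕ} (hk : X ^ k ∣ g - g') {j : ℕ} (hj : 2 ≤ j) :
    X ^ (k + 1) ∣ g ^ j - g' ^ j := by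
  obtain ⟨i, rfl⟩ : ∃ i, j = i + 1 + 1 := ⟨j - 2, by omega⟩
  have split : g ^ (i + 1 + 1) - g' ^ (i + 1 + 1) =
      (g ^ (i + 1) - g' ^ (i + 1)) * g + (g - g') * g' ^ (i + 1) := by ring
  rw [split, pow_succ]
  exact dvd_add (mul_dvd_mul (hk.trans (sub_dvd_pow_sub_pow g g' _)) (X_dvd_iff.mpr hg))
    (mul_dvd_mul hk (dvd_pow (X_dvd_iff.mpr hg') (Nat.succ_ne_zero i)))

@[simp]
theorem coeff_psComp (f g : R⟦X⟧) (m : ℕ) :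
    coeff m (psComp f g) = ∑ j ∈ range (m + 1), coeff j f * coeff m (g ^ j) := by
  simp [psComp]

theorem constantCoeff_psComp (f g : R⟦X⟧) : constantCoeff (psComp f g) = constantCoeff f := by
  simp only [← coeff_zero_eq_constantCoeff_apply, coeff_psComp, zero_add, sum_range_one, pow_zero,
    coeff_one, if_true, mul_one]

theorem coeff_one_psComp (f g : R⟦X⟧) : coeff 1 (psComp f g) = coeff 1 f * coeff 1 g := by
  simp [sum_range_succ]

theorem X_pow_succ_dvd_psComp_sub_psComp {f f' g g' : R⟦X⟧} (hf' : coeff 1 f' = 1)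
    (hg0 : constantCoeff g = 0) (hg1 : coeff 1 g = 1) (hg0' : constantCoeff g' = 0) {k : ℕ}
    (hf : X ^ k ∣ f - f') (hg : X ^ k ∣ g - g') :
    X ^ (k + 1) ∣ psComp f g - psComp f' g' - ((f - f') + (g - g')) := by
  rw [X_pow_dvd_iff]
  intro m hm
  have outer : ∑ j ∈ range (m + 1), coeff j (f - f') * coeff m (g ^ j) = coeff m (f - f') := by
    rw [sum_eq_single_of_mem m (self_mem_range_succ m)]
    · rw [coeff_self_pow_of_constantCoeff_eq_zero hg0, hg1, one_pow, mul_one]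
    · intro j hj hjm
      rw [X_pow_dvd_iff.mp hf j (by simp at hj; omega), zero_mul]
  have inner :
      ∑ j ∈ range (m + 1), coeff j f' * coeff m (g ^ j - g' ^ j) = coeff m (g - g') := by
    rw [sum_eq_single 1]
    · rw [hf', one_mul, pow_one, pow_one]
    · intro j _ hj1
      obtain rfl | hj := (Nat.lt_or_gt_of_ne hj1).imp Nat.lt_one_iff.mp id
      · simp
      · rw [X_pow_dvd_iff.mp (X_pow_succ_dvd_pow_sub_pow hg0 hg0' hg hj) m hm, mul_zero]
    · intro h1
      obtain rfl : m = 0 := by simpa using h1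
      simp [hg0, hg0']
  calc coeff m (psComp f g - psComp f' g' - ((f - f') + (g - g')))
      = (∑ j ∈ range (m + 1), coeff j (f - f') * coeff m (g ^ j)
          + ∑ j ∈ range (m + 1), coeff j f' * coeff m (g ^ j - g' ^ j))
        - (coeff m (f - f') + coeff m (g - g')) := by
        simp only [map_sub, map_add, coeff_psComp, ← sum_add_distrib, ← sum_sub_distrib]
        congr 1
        exact sum_congr rfl fun j _ => by ring
    _ = 0 := by rw [outer, inner, sub_self]

theorem constantCoeff_psIter {ω : R⟦X⟧} (h0 : constantCoeff ω = 0) (m : ℕ) :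
    constantCoeff (psIter ω m) = 0 := by
  cases m with
  | zero => exact constantCoeff_X
  | succ m => rw [psIter, constantCoeff_psComp, h0]

theorem coeff_one_psIter {ω : R⟦X⟧} (h1 : coeff 1 ω = 1) (m : ℕ) :
    coeff 1 (psIter ω m) = 1 := by
  induction m with
  | zero => exact coeff_one_X
  | succ m ih => rw [psIter, coeff_one_psComp, h1, ih, one_mul]

theorem X_pow_succ_dvd_psIter_sub_psIter {ω ω' : R⟦X⟧} (h0 : constantCoeff ω = 0)
    (h1 : coeff 1 ω = 1) (h0' : constantCoeff ω' = 0) (h1' : coeff 1 ω' = 1) {k : ℕ}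
    (hk : X ^ k ∣ ω - ω') (m : ℕ) :
    X ^ (k + 1) ∣ psIter ω m - psIter ω' m - (m : R⟦X⟧) * (ω - ω') := by
  induction m with
  | zero => simp [psIter]
  | succ m ih =>
    have hk' : X ^ k ∣ psIter ω m - psIter ω' m :=
      (sub_add_cancel (psIter ω m - psIter ω' m) ((m : R⟦X⟧) * (ω - ω'))) ▸
        dvd_add ((pow_dvd_pow X k.le_succ).trans ih) (dvd_mul_of_dvd_right hk _)
    have step := X_pow_succ_dvd_psComp_sub_psComp h1' (constantCoeff_psIter h0 m)
      (coeff_one_psIter h1 m) (constantCoeff_psIter h0' m) hk hk'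
    have split : psIter ω (m + 1) - psIter ω' (m + 1) - ((m + 1 : ℕ) : R⟦X⟧) * (ω - ω') =
        (psComp ω (psIter ω m) - psComp ω' (psIter ω' m)
            - ((ω - ω') + (psIter ω m - psIter ω' m)))
          + (psIter ω m - psIter ω' m - m * (ω - ω')) := by
      rw [psIter, psIter]; push_cast; ring
    exact split ▸ dvd_add step ih

theorem coeff_psIter_sub_psIter {ω ω' : R⟦X⟧} (h0 : constantCoeff ω = 0)
    (h1 : coeff 1 ω = 1) (h0' : constantCoeff ω' = 0) (h1' : coeff 1 ω' = 1) {k : ℕ}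
    (hk : X ^ k ∣ ω - ω') (m : ℕ) :
    coeff k (psIter ω m) - coeff k (psIter ω' m) = m * (coeff k ω - coeff k ω') := by
  have := X_pow_dvd_iff.mp (X_pow_succ_dvd_psIter_sub_psIter h0 h1 h0' h1' hk m) k k.lt_succ_self
  rwa [map_sub, map_sub, ← map_natCast (C (R := R)), coeff_C_mul, map_sub, sub_eq_zero] at this

theorem eq_of_psIter_eq {ω ω' : R⟦X⟧} (h0 : constantCoeff ω = 0)
    (h1 : coeff 1 ω = 1) (h0' : constantCoeff ω' = 0) (h1' : coeff 1 ω' = 1) {n : ℕ}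
    (hn : IsUnit (n : R)) (h : psIter ω n = psIter ω' n) : ω = ω' := by
  have hdvd : ∀ k, X ^ k ∣ ω - ω' := by
    intro k
    induction k with
    | zero => exact one_dvd _
    | succ k ih =>
      have := X_pow_succ_dvd_psIter_sub_psIter h0 h1 h0' h1' ih n
      rwa [h, sub_self, zero_sub, dvd_neg, ← map_natCast (C (R := R)),
        (hn.map C).dvd_mul_left] at this
  ext m
  simpa [sub_eq_zero] using X_pow_dvd_iff.mp (hdvd (m + 1)) m m.lt_succ_self

/-- If `τ` is the truncation of the root `ω` below degree `k + 2`, then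
`coeff (k + 2) ω^[n] = coeff (k + 2) τ^[n] + n * coeff (k + 2) ω` by `coeff_psIter_sub_psIter`;
the coefficient is chosen to make this equal to `coeff (k + 2) g`. -/
noncomputable def iterRootCoeff (g : R⟦X⟧) (n : ℕ) : ℕ → R
  | 0 => 0
  | 1 => 1
  | k + 2 => Ring.inverse (n : R) * (coeff (k + 2) g -
      coeff (k + 2) (psIter (mk fun i => if _ : i < k + 2 then iterRootCoeff g n i else 0) n))

noncomputable def iterRoot (g : R⟦X⟧) (n : ℕ) : R⟦X⟧ := mk (iterRootCoeff g n)

theorem constantCoeff_iterRoot (g : R⟦X⟧) (n : ℕ) : constantCoeff (iterRoot g n) = 0 := by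
  rw [← coeff_zero_eq_constantCoeff_apply, iterRoot, coeff_mk, iterRootCoeff]

theorem coeff_one_iterRoot (g : R⟦X⟧) (n : ℕ) : coeff 1 (iterRoot g n) = 1 := by
  rw [iterRoot, coeff_mk, iterRootCoeff]

theorem psIter_iterRoot {g : R⟦X⟧} (hg0 : constantCoeff g = 0) (hg1 : coeff 1 g = 1) {n : ℕ}
    (hn : IsUnit (n : R)) : psIter (iterRoot g n) n = g := by
  have h0 := constantCoeff_iterRoot g n
  have h1 := coeff_one_iterRoot g n
  ext m
  match m with
  | 0 => simp only [coeff_zero_eq_constantCoeff_apply, constantCoeff_psIter h0, hg0]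
  | 1 => rw [coeff_one_psIter h1, hg1]
  | k + 2 =>
    set τ : R⟦X⟧ := mk fun i => if i < k + 2 then iterRootCoeff g n i else 0
    have hτ0 : constantCoeff τ = 0 := by
      rw [← coeff_zero_eq_constantCoeff_apply, coeff_mk, if_pos (by omega), iterRootCoeff]
    have hτ1 : coeff 1 τ = 1 := by rw [coeff_mk, if_pos (by omega), iterRootCoeff]
    have hωτ : X ^ (k + 2) ∣ iterRoot g n - τ := X_pow_dvd_iff.mpr fun i hi => by
      simp [τ, iterRoot, hi]
    have hcoeff : coeff (k + 2) (iterRoot g n) = Ring.inverse (n : R) * (coeff (k + 2) g -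
        coeff (k + 2) (psIter τ n)) := by
      rw [iterRoot, coeff_mk, iterRootCoeff]; simp only [dite_eq_ite]; rfl
    have := coeff_psIter_sub_psIter h0 h1 hτ0 hτ1 hωτ n
    rw [coeff_mk, if_neg (lt_irrefl _), sub_zero, hcoeff, ← mul_assoc,
      Ring.mul_inverse_cancel _ hn, one_mul, sub_eq_iff_eq_add] at this
    rw [this, sub_add_cancel]

theorem existsUnique_psIter_eq {g : R⟦X⟧} (hg0 : constantCoeff g = 0) (hg1 : coeff 1 g = 1)
    {n : ℕ} (hn : IsUnit (n : R)) :
    ∃! ω : R⟦X⟧, (constantCoeff ω = 0 ∧ coeff 1 ω = 1) ∧ psIter ω n = g :=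
  ⟨iterRoot g n,
    ⟨⟨constantCoeff_iterRoot g n, coeff_one_iterRoot g n⟩, psIter_iterRoot hg0 hg1 hn⟩,
    fun _ ⟨⟨h0, h1⟩, h⟩ => eq_of_psIter_eq h0 h1 (constantCoeff_iterRoot g n)
      (coeff_one_iterRoot g n) hn (h.trans (psIter_iterRoot hg0 hg1 hn).symm)⟩

end

theorem unique_root_char_p_coprime_general {K : Type*} [Field K]
    (p : ℕ) [CharP K p] (n : ℕ) (hpn : ¬ p ∣ n)
    (g : K⟦X⟧) (hg0 : constantCoeff g = 0) (hg1 : coeff 1 g = 1) :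
    ∃! ω : K⟦X⟧, (constantCoeff ω = 0 ∧ coeff 1 ω = 1) ∧ psIter ω n = g :=
  existsUnique_psIter_eq hg0 hg1 (Ne.isUnit fun h => hpn ((CharP.cast_eq_zero_iff K p n).mp h))

/-- for a field `K` of characteristic `p > 0` and `n ≥ 1` not divisible by `p`,
every `g ∈ 𝒥(K)` has a unique iterative root of order `n` in `𝒥(K)`. -/
theorem unique_root_char_p_coprime {K : Type*} [Field K]
    (p : ℕ) [CharP K p] (hp : 0 < p) (n : ℕ) (hn : 1 ≤ n) (hpn : ¬ p ∣ n)
    (g : K⟦X⟧) (hg0 : constantCoeff g = 0) (hg1 : coeff 1 g = 1) :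
    ∃! ω : K⟦X⟧, (constantCoeff ω = 0 ∧ coeff 1 ω = 1) ∧ psIter ω n = g :=
  unique_root_char_p_coprime_general p n hpn g hg0 hg1
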